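/- Assume (cond1) and (cond2) with |U| = 1, ρ ≥ 1 and A₁ ≥ 1, and suppose v ∈ C^{2,α}(ℝ^d) satisfies ρ‖v‖_∞ ≤ A₁, ρ^{1−α/2}[v]_{0,α} ≤ A₁, ρ^{1/2−α/2}[v]_{1,α} ≤ A₁, ρ^{−α/2}[v]_{2,α} ≤ A₁, ρ^{1/2}⟦v⟧₁ ≤ A₁ and ⟦v⟧₂ ≤ A₁. Define π(x,u) := Γ(x, Dv(x), D²v(x))(u). Then there exists C depending only on λ and C₀ (and d, α) such that ‖∫_U π(·,u) ln π(·,u) du‖_∞ ≤ C(1 + A₁(ρ^{−1/2} + ε₀)) and [∫_U π(·,u) ln π(·,u) du]_{0,α} ≤ exp[C(1 + A₁(ρ^{α/2−1/2} + ε₁ + ρ^{α/2}ε₀))]. -/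

import Mathlib

open MeasureTheory Real Metric
noncomputable section

/-- First-order partial derivative `∂v/∂xᵢ`. -/
def pd1 (d : ℕ) (v : EuclideanSpace ℝ (Fin d) → ℝ) (x : EuclideanSpace ℝ (Fin d))
    (i : Fin d) : ℝ :=
  fderiv ℝ v x (EuclideanSpace.single i 1)

/-- Second-order partial derivative `∂²v/∂xᵢ∂xⱼ`. -/
def pd2 (d : ℕ) (v : EuclideanSpace ℝ (Fin d) → ℝ) (x : EuclideanSpace ℝ (Fin d))
    (i j : Fin d) : ℝ :=
  fderiv ℝ (fun y => fderiv ℝ v y (EuclideanSpace.single j 1)) x (EuclideanSpace.single i 1)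

/-- The exponent `(1/λ)(r(x,u) + b(x,u)·p + (1/2) tr(Σ(x,u) X))` of the Gibbs density. -/
def gibbsExponent (d l : ℕ) (lam : ℝ)
    (r : EuclideanSpace ℝ (Fin d) → EuclideanSpace ℝ (Fin l) → ℝ)
    (b : EuclideanSpace ℝ (Fin d) → EuclideanSpace ℝ (Fin l) → Fin d → ℝ)
    (S : EuclideanSpace ℝ (Fin d) → EuclideanSpace ℝ (Fin l) → Matrix (Fin d) (Fin d) ℝ)
    (x : EuclideanSpace ℝ (Fin d)) (p : Fin d → ℝ) (X : Matrix (Fin d) (Fin d) ℝ)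
    (u : EuclideanSpace ℝ (Fin l)) : ℝ :=
  (1 / lam) * (r x u + ∑ i, b x u i * p i + (1 / 2) * ∑ i, ∑ j, S x u i j * X j i)

/-- The Gibbs density `Γ(x,p,X)(u)`. -/
def gibbsDensity (d l : ℕ) (lam : ℝ) (U : Set (EuclideanSpace ℝ (Fin l)))
    (r : EuclideanSpace ℝ (Fin d) → EuclideanSpace ℝ (Fin l) → ℝ)
    (b : EuclideanSpace ℝ (Fin d) → EuclideanSpace ℝ (Fin l) → Fin d → ℝ)
    (S : EuclideanSpace ℝ (Fin d) → EuclideanSpace ℝ (Fin l) → Matrix (Fin d) (Fin d) ℝ)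
    (x : EuclideanSpace ℝ (Fin d)) (p : Fin d → ℝ) (X : Matrix (Fin d) (Fin d) ℝ)
    (u : EuclideanSpace ℝ (Fin l)) : ℝ :=
  Real.exp (gibbsExponent d l lam r b S x p X u) /
    ∫ u' in U, Real.exp (gibbsExponent d l lam r b S x p X u')

/-- The Hessian matrix of `v` at `x`. -/
def hessian (d : ℕ) (v : EuclideanSpace ℝ (Fin d) → ℝ) (x : EuclideanSpace ℝ (Fin d)) :
    Matrix (Fin d) (Fin d) ℝ :=
  Matrix.of fun i j => pd2 d v x i j

/-- The policy `π(x,·) = Γ(x, Dv(x), D²v(x))` obtained from a value function `v`. -/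
def gibbsPolicy (d l : ℕ) (lam : ℝ) (U : Set (EuclideanSpace ℝ (Fin l)))
    (r : EuclideanSpace ℝ (Fin d) → EuclideanSpace ℝ (Fin l) → ℝ)
    (b : EuclideanSpace ℝ (Fin d) → EuclideanSpace ℝ (Fin l) → Fin d → ℝ)
    (S : EuclideanSpace ℝ (Fin d) → EuclideanSpace ℝ (Fin l) → Matrix (Fin d) (Fin d) ℝ)
    (v : EuclideanSpace ℝ (Fin d) → ℝ)
    (x : EuclideanSpace ℝ (Fin d)) (u : EuclideanSpace ℝ (Fin l)) : ℝ :=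
  gibbsDensity d l lam U r b S x (fun i => pd1 d v x i) (hessian d v x) u


private lemma exp_sub_exp_abs {a b B : ℝ} (ha : |a| ≤ B) (hb : |b| ≤ B) :
    |Real.exp a - Real.exp b| ≤ Real.exp B * |a - b| := by
  wlog h : b ≤ a generalizing a b
  · rw [abs_sub_comm, abs_sub_comm a b]; exact this hb ha (le_of_not_ge h)
  have h1 : Real.exp a * ((b - a) + 1) ≤ Real.exp b := by
    have h2 := Real.add_one_le_exp (b - a)
    calc Real.exp a * ((b - a) + 1) ≤ Real.exp a * Real.exp (b - a) := by
          nlinarith [Real.exp_pos a]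
      _ = Real.exp b := by rw [← Real.exp_add]; ring_nf
  have hea : Real.exp a ≤ Real.exp B := Real.exp_le_exp.2 ((le_abs_self a).trans ha)
  have hba : Real.exp b ≤ Real.exp a := Real.exp_le_exp.2 h
  rw [abs_of_nonneg (by linarith), abs_of_nonneg (by linarith)]
  nlinarith [Real.exp_pos a]

private lemma log_sub_log_abs {a z m : ℝ} (hm : 0 < m) (ha : m ≤ a) (hz : m ≤ z) :
    |Real.log a - Real.log z| ≤ |a - z| / m := by
  wlog h : z ≤ a generalizing a z
  · rw [abs_sub_comm, abs_sub_comm a z]; exact this hz ha (le_of_not_ge h)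
  have haz : 0 < z := lt_of_lt_of_le hm hz
  have h1 : Real.log a - Real.log z = Real.log (a / z) := by
    rw [Real.log_div (by linarith) (by linarith)]
  have h2 : Real.log (a / z) ≤ a / z - 1 :=
    Real.log_le_sub_one_of_pos (div_pos (lt_of_lt_of_le hm ha) haz)
  have h3 : a / z - 1 = (a - z) / z := by field_simp
  have h4 : (a - z) / z ≤ (a - z) / m := by
    apply div_le_div_of_nonneg_left (by linarith) hm hz
  have h5 : 0 ≤ Real.log a - Real.log z := by
    rw [h1]; exact Real.log_nonneg (by rw [le_div_iff₀ haz]; linarith)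
  rw [abs_of_nonneg h5, abs_of_nonneg (by linarith)]
  linarith [h1, h2]

private lemma pd2_eq_iterated {d : ℕ} {v : EuclideanSpace ℝ (Fin d) → ℝ}
    (hv : ContDiff ℝ 2 v) (x : EuclideanSpace ℝ (Fin d)) (i j : Fin d) :
    pd2 d v x i j =
      iteratedFDeriv ℝ 2 v x ![EuclideanSpace.single i 1, EuclideanSpace.single j 1] := by
  have hdiff : DifferentiableAt ℝ (fderiv ℝ v) x :=
    ((hv.fderiv_right (m := 1) (le_refl 2)).differentiable (by norm_num)).differentiableAt
  rw [iteratedFDeriv_two_apply]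
  show fderiv ℝ (fun y => (fderiv ℝ v y) (EuclideanSpace.single j 1)) x
      (EuclideanSpace.single i 1) = _
  rw [fderiv_clm_apply hdiff (differentiableAt_const _)]
  simp [ContinuousLinearMap.flip_apply]

private lemma pd2_abs_le {d : ℕ} {v : EuclideanSpace ℝ (Fin d) → ℝ}
    (hv : ContDiff ℝ 2 v) (x : EuclideanSpace ℝ (Fin d)) (i j : Fin d) :
    |pd2 d v x i j| ≤ ‖iteratedFDeriv ℝ 2 v x‖ := by
  rw [pd2_eq_iterated hv x i j]
  calc |iteratedFDeriv ℝ 2 v x ![EuclideanSpace.single i 1, EuclideanSpace.single j 1]|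
      = ‖iteratedFDeriv ℝ 2 v x ![EuclideanSpace.single i 1, EuclideanSpace.single j 1]‖ := rfl
    _ ≤ ‖iteratedFDeriv ℝ 2 v x‖ *
        ∏ k : Fin 2, ‖(![EuclideanSpace.single i 1, EuclideanSpace.single j 1] : Fin 2 → _) k‖ :=
        (iteratedFDeriv ℝ 2 v x).le_opNorm _
    _ = ‖iteratedFDeriv ℝ 2 v x‖ := by
        simp [Fin.prod_univ_two, EuclideanSpace.norm_single]

private lemma pd2_sub_abs_le {d : ℕ} {v : EuclideanSpace ℝ (Fin d) → ℝ}
    (hv : ContDiff ℝ 2 v) (x y : EuclideanSpace ℝ (Fin d)) (i j : Fin d) :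
    |pd2 d v x i j - pd2 d v y i j| ≤ ‖iteratedFDeriv ℝ 2 v x - iteratedFDeriv ℝ 2 v y‖ := by
  rw [pd2_eq_iterated hv x i j, pd2_eq_iterated hv y i j]
  have : iteratedFDeriv ℝ 2 v x ![EuclideanSpace.single i 1, EuclideanSpace.single j 1] -
      iteratedFDeriv ℝ 2 v y ![EuclideanSpace.single i 1, EuclideanSpace.single j 1] =
      (iteratedFDeriv ℝ 2 v x - iteratedFDeriv ℝ 2 v y)
        ![EuclideanSpace.single i 1, EuclideanSpace.single j 1] := by
    simp [ContinuousMultilinearMap.sub_apply]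
  rw [this]
  calc _ ≤ ‖iteratedFDeriv ℝ 2 v x - iteratedFDeriv ℝ 2 v y‖ *
        ∏ k : Fin 2, ‖(![EuclideanSpace.single i 1, EuclideanSpace.single j 1] : Fin 2 → _) k‖ :=
        (iteratedFDeriv ℝ 2 v x - iteratedFDeriv ℝ 2 v y).le_opNorm _
    _ = _ := by simp [Fin.prod_univ_two, EuclideanSpace.norm_single]

private lemma pd1_abs_le {d : ℕ} (v : EuclideanSpace ℝ (Fin d) → ℝ)
    (x : EuclideanSpace ℝ (Fin d)) (i : Fin d) :
    |pd1 d v x i| ≤ ‖fderiv ℝ v x‖ := by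
  calc |pd1 d v x i| = ‖fderiv ℝ v x (EuclideanSpace.single i 1)‖ := rfl
    _ ≤ ‖fderiv ℝ v x‖ * ‖EuclideanSpace.single i (1:ℝ)‖ := (fderiv ℝ v x).le_opNorm _
    _ = ‖fderiv ℝ v x‖ := by simp [EuclideanSpace.norm_single]

private lemma pd1_sub_abs_le {d : ℕ} (v : EuclideanSpace ℝ (Fin d) → ℝ)
    (x y : EuclideanSpace ℝ (Fin d)) (i : Fin d) :
    |pd1 d v x i - pd1 d v y i| ≤ ‖fderiv ℝ v x - fderiv ℝ v y‖ := by
  have : pd1 d v x i - pd1 d v y i =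
      (fderiv ℝ v x - fderiv ℝ v y) (EuclideanSpace.single i 1) := by
    simp [pd1, ContinuousLinearMap.sub_apply]
  rw [this]
  calc _ = ‖(fderiv ℝ v x - fderiv ℝ v y) (EuclideanSpace.single i 1)‖ := rfl
    _ ≤ ‖fderiv ℝ v x - fderiv ℝ v y‖ * ‖EuclideanSpace.single i (1:ℝ)‖ :=
        (fderiv ℝ v x - fderiv ℝ v y).le_opNorm _
    _ = _ := by simp [EuclideanSpace.norm_single]
private lemma Z_facts {l : ℕ} {U : Set (EuclideanSpace ℝ (Fin l))} (hUm : MeasurableSet U)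
    (hvol : volume U = 1) {q : EuclideanSpace ℝ (Fin l) → ℝ} (hqm : Measurable q)
    {B : ℝ} (hq : ∀ u ∈ U, |q u| ≤ B) :
    IntegrableOn (fun u => Real.exp (q u)) U ∧
    Real.exp (-B) ≤ (∫ u in U, Real.exp (q u)) ∧ (∫ u in U, Real.exp (q u)) ≤ Real.exp B := by
  have hvol' : volume U ≠ ⊤ := by rw [hvol]; exact ENNReal.one_ne_top
  have hvlt : volume U < ⊤ := lt_of_le_of_ne le_top hvol'
  have hbd : ∀ u ∈ U, Real.exp (q u) ≤ Real.exp B := fun u hu =>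
    Real.exp_le_exp.2 ((le_abs_self _).trans (hq u hu))
  have hbd' : ∀ u ∈ U, Real.exp (-B) ≤ Real.exp (q u) := fun u hu =>
    Real.exp_le_exp.2 (neg_le_of_abs_le (hq u hu))
  have hint : IntegrableOn (fun u => Real.exp (q u)) U := by
    apply Measure.integrableOn_of_bounded hvol'
      (Real.measurable_exp.comp hqm).aestronglyMeasurable (M := Real.exp B)
    filter_upwards [self_mem_ae_restrict hUm] with u hu
    simpa [Real.abs_exp] using hbd u hu
  have hconst : IntegrableOn (fun _ : EuclideanSpace ℝ (Fin l) => Real.exp B) U :=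
    integrableOn_const hvol'
  have hconst' : IntegrableOn (fun _ : EuclideanSpace ℝ (Fin l) => Real.exp (-B)) U :=
    integrableOn_const hvol'
  refine ⟨hint, ?_, ?_⟩
  · calc Real.exp (-B) = (volume U).toReal • Real.exp (-B) := by
          rw [hvol]; simp
      _ = ∫ _ in U, Real.exp (-B) := (setIntegral_const _).symm
      _ ≤ ∫ u in U, Real.exp (q u) := setIntegral_mono_on hconst' hint hUm hbd'
  · calc (∫ u in U, Real.exp (q u)) ≤ ∫ _ in U, Real.exp B :=
          setIntegral_mono_on hint hconst hUm hbd
      _ = (volume U).toReal • Real.exp B := setIntegral_const _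
      _ = Real.exp B := by rw [hvol]; simp
private lemma qexp_facts {l : ℕ} {U : Set (EuclideanSpace ℝ (Fin l))} (hUm : MeasurableSet U)
    (hvol : volume U = 1) {q : EuclideanSpace ℝ (Fin l) → ℝ} (hqm : Measurable q)
    {B : ℝ} (hB : 0 ≤ B) (hq : ∀ u ∈ U, |q u| ≤ B) :
    IntegrableOn (fun u => q u * Real.exp (q u)) U ∧
    |∫ u in U, q u * Real.exp (q u)| ≤ B * Real.exp B := by
  have hvol' : volume U ≠ ⊤ := by rw [hvol]; exact ENNReal.one_ne_top
  have hvlt : volume U < ⊤ := lt_of_le_of_ne le_top hvol'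
  have hbd : ∀ u ∈ U, ‖q u * Real.exp (q u)‖ ≤ B * Real.exp B := by
    intro u hu
    rw [Real.norm_eq_abs, abs_mul, Real.abs_exp]
    exact mul_le_mul (hq u hu) (Real.exp_le_exp.2 ((le_abs_self _).trans (hq u hu)))
      (Real.exp_pos _).le hB
  have hm : AEStronglyMeasurable (fun u => q u * Real.exp (q u)) volume :=
    (hqm.mul (Real.measurable_exp.comp hqm)).aestronglyMeasurable
  have hint : IntegrableOn (fun u => q u * Real.exp (q u)) U := by
    apply Measure.integrableOn_of_bounded hvol' hm (M := B * Real.exp B)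
    filter_upwards [self_mem_ae_restrict hUm] with u hu using hbd u hu
  refine ⟨hint, ?_⟩
  calc |∫ u in U, q u * Real.exp (q u)| ≤ B * Real.exp B * (volume U).toReal :=
        norm_setIntegral_le_of_norm_le_const hvlt hbd
    _ = B * Real.exp B := by rw [hvol]; simp

private lemma entropy_formula {l : ℕ} {U : Set (EuclideanSpace ℝ (Fin l))} (hUm : MeasurableSet U)
    (hvol : volume U = 1) {q : EuclideanSpace ℝ (Fin l) → ℝ} (hqm : Measurable q)
    {B : ℝ} (hB : 0 ≤ B) (hq : ∀ u ∈ U, |q u| ≤ B) :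
    (∫ u in U, (q u - Real.log (∫ u' in U, Real.exp (q u'))) *
        (Real.exp (q u) / (∫ u' in U, Real.exp (q u')))) =
      (∫ u in U, q u * Real.exp (q u)) / (∫ u' in U, Real.exp (q u')) -
        Real.log (∫ u' in U, Real.exp (q u')) := by
  obtain ⟨hintE, hZlo, hZhi⟩ := Z_facts hUm hvol hqm hq
  obtain ⟨hintQ, _⟩ := qexp_facts hUm hvol hqm hB hq
  set Z := ∫ u' in U, Real.exp (q u') with hZdef
  have hZpos : 0 < Z := lt_of_lt_of_le (Real.exp_pos _) hZlo
  have heq : (fun u => (q u - Real.log Z) * (Real.exp (q u) / Z)) =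
      fun u => q u * Real.exp (q u) * Z⁻¹ - Real.log Z * Z⁻¹ * Real.exp (q u) := by
    funext u; simp only [div_eq_mul_inv]; ring
  rw [heq, integral_sub (hintQ.mul_const _) (hintE.const_mul _)]
  rw [integral_mul_const, MeasureTheory.integral_const_mul]
  rw [div_eq_mul_inv]
  have : Real.log Z * Z⁻¹ * Z = Real.log Z := by field_simp
  rw [← hZdef, this]

private lemma entropy_abs_le {l : ℕ} {U : Set (EuclideanSpace ℝ (Fin l))} (hUm : MeasurableSet U)
    (hvol : volume U = 1) {q : EuclideanSpace ℝ (Fin l) → ℝ} (hqm : Measurable q)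
    {B : ℝ} (hB : 0 ≤ B) (hq : ∀ u ∈ U, |q u| ≤ B) :
    |∫ u in U, (q u - Real.log (∫ u' in U, Real.exp (q u'))) *
        (Real.exp (q u) / (∫ u' in U, Real.exp (q u')))| ≤ 2 * B := by
  have hvol' : volume U ≠ ⊤ := by rw [hvol]; exact ENNReal.one_ne_top
  have hvlt : volume U < ⊤ := lt_of_le_of_ne le_top hvol'
  obtain ⟨hintE, hZlo, hZhi⟩ := Z_facts hUm hvol hqm hq
  set Z := ∫ u' in U, Real.exp (q u') with hZdef
  have hZpos : 0 < Z := lt_of_lt_of_le (Real.exp_pos _) hZlo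
  have hlogZ : |Real.log Z| ≤ B := by
    rw [abs_le]
    refine ⟨?_, ?_⟩
    · calc -B = Real.log (Real.exp (-B)) := (Real.log_exp _).symm
        _ ≤ Real.log Z := Real.log_le_log (Real.exp_pos _) hZlo
    · calc Real.log Z ≤ Real.log (Real.exp B) := Real.log_le_log hZpos hZhi
        _ = B := Real.log_exp _
  have hptw : ∀ u ∈ U, |(q u - Real.log Z) * (Real.exp (q u) / Z)| ≤
      2 * B * (Real.exp (q u) / Z) := by
    intro u hu
    rw [abs_mul, abs_of_pos (by positivity : (0:ℝ) < Real.exp (q u) / Z)]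
    have h1 : |q u - Real.log Z| ≤ 2 * B := by
      calc |q u - Real.log Z| ≤ |q u| + |Real.log Z| := abs_sub _ _
        _ ≤ 2 * B := by linarith [hq u hu]
    exact mul_le_mul_of_nonneg_right h1 (by positivity)
  have hm : AEStronglyMeasurable
      (fun u => (q u - Real.log Z) * (Real.exp (q u) / Z)) volume :=
    ((hqm.sub measurable_const).mul
      ((Real.measurable_exp.comp hqm).div_const Z)).aestronglyMeasurable
  have hint : IntegrableOn (fun u => (q u - Real.log Z) * (Real.exp (q u) / Z)) U := by
    apply Measure.integrableOn_of_bounded hvol' hm (M := 2 * B * (Real.exp B / Z))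
    filter_upwards [self_mem_ae_restrict hUm] with u hu
    rw [Real.norm_eq_abs]
    refine (hptw u hu).trans ?_
    have h2 : Real.exp (q u) / Z ≤ Real.exp B / Z := by
      gcongr
      exact (le_abs_self _).trans (hq u hu)
    nlinarith [div_pos (Real.exp_pos (q u)) hZpos]
  have hgint : IntegrableOn (fun u => 2 * B * (Real.exp (q u) / Z)) U :=
    (hintE.div_const Z).const_mul (2 * B)
  calc |∫ u in U, (q u - Real.log Z) * (Real.exp (q u) / Z)|
      ≤ ∫ u in U, |(q u - Real.log Z) * (Real.exp (q u) / Z)| := by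
        rw [← Real.norm_eq_abs]
        refine (norm_integral_le_integral_norm _).trans_eq ?_
        simp only [Real.norm_eq_abs]
    _ ≤ ∫ u in U, 2 * B * (Real.exp (q u) / Z) :=
        setIntegral_mono_on hint.abs hgint hUm hptw
    _ = (2 * B / Z) * ∫ u in U, Real.exp (q u) := by
        rw [← MeasureTheory.integral_const_mul]
        congr 1; funext u; ring
    _ = 2 * B := by
        rw [← hZdef]; field_simp
private lemma entropy_diff_le {l : ℕ} {U : Set (EuclideanSpace ℝ (Fin l))} (hUm : MeasurableSet U)
    (hvol : volume U = 1) {q1 q2 : EuclideanSpace ℝ (Fin l) → ℝ}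
    (h1m : Measurable q1) (h2m : Measurable q2) {B δ : ℝ} (hB : 0 ≤ B) (hδ : 0 ≤ δ)
    (hq1 : ∀ u ∈ U, |q1 u| ≤ B) (hq2 : ∀ u ∈ U, |q2 u| ≤ B)
    (hd : ∀ u ∈ U, |q1 u - q2 u| ≤ δ) :
    |(∫ u in U, (q1 u - Real.log (∫ u' in U, Real.exp (q1 u'))) *
        (Real.exp (q1 u) / (∫ u' in U, Real.exp (q1 u')))) -
      (∫ u in U, (q2 u - Real.log (∫ u' in U, Real.exp (q2 u'))) *
        (Real.exp (q2 u) / (∫ u' in U, Real.exp (q2 u'))))| ≤ Real.exp (5 * B + 2) * δ := by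
  have hvol' : volume U ≠ ⊤ := by rw [hvol]; exact ENNReal.one_ne_top
  have hvlt : volume U < ⊤ := lt_of_le_of_ne le_top hvol'
  obtain ⟨hintE1, hZ1lo, hZ1hi⟩ := Z_facts hUm hvol h1m hq1
  obtain ⟨hintE2, hZ2lo, hZ2hi⟩ := Z_facts hUm hvol h2m hq2
  obtain ⟨hintQ1, hI1b⟩ := qexp_facts hUm hvol h1m hB hq1
  obtain ⟨hintQ2, hI2b⟩ := qexp_facts hUm hvol h2m hB hq2
  rw [entropy_formula hUm hvol h1m hB hq1, entropy_formula hUm hvol h2m hB hq2]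
  set E := Real.exp B with hEdef
  set Z1 := ∫ u' in U, Real.exp (q1 u') with hZ1def
  set Z2 := ∫ u' in U, Real.exp (q2 u') with hZ2def
  set I1 := ∫ u in U, q1 u * Real.exp (q1 u) with hI1def
  set I2 := ∫ u in U, q2 u * Real.exp (q2 u) with hI2def
  have hE0 : (0:ℝ) < E := Real.exp_pos _
  have hE1 : (1:ℝ) ≤ E := Real.one_le_exp hB
  have h1B : 1 + B ≤ E := by
    have := Real.add_one_le_exp B; linarith
  have hZ1pos : 0 < Z1 := lt_of_lt_of_le (Real.exp_pos _) hZ1lo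
  have hZ2pos : 0 < Z2 := lt_of_lt_of_le (Real.exp_pos _) hZ2lo
  have hZi1 : Z1⁻¹ ≤ E := by
    have h := inv_anti₀ (Real.exp_pos (-B)) hZ1lo
    rwa [Real.exp_neg, inv_inv] at h
  have hZi2 : Z2⁻¹ ≤ E := by
    have h := inv_anti₀ (Real.exp_pos (-B)) hZ2lo
    rwa [Real.exp_neg, inv_inv] at h
  -- |Z1 - Z2| ≤ E * δ
  have hZdiff : |Z1 - Z2| ≤ E * δ := by
    have heq : Z1 - Z2 = ∫ u in U, (Real.exp (q1 u) - Real.exp (q2 u)) :=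
      (integral_sub hintE1 hintE2).symm
    rw [heq, ← Real.norm_eq_abs]
    have := norm_setIntegral_le_of_norm_le_const (C := E * δ) hvlt
      (fun u hu => by
        rw [Real.norm_eq_abs]
        show |Real.exp (q1 u) - Real.exp (q2 u)| ≤ E * δ
        calc |Real.exp (q1 u) - Real.exp (q2 u)| ≤ E * |q1 u - q2 u| :=
              exp_sub_exp_abs (hq1 u hu) (hq2 u hu)
          _ ≤ E * δ := by
              exact mul_le_mul_of_nonneg_left (hd u hu) hE0.le)
    calc ‖∫ u in U, (Real.exp (q1 u) - Real.exp (q2 u))‖ ≤ E * δ * (volume U).toReal := this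
      _ = E * δ := by rw [hvol]; simp
  -- |I1 - I2| ≤ (1+B) * E * δ
  have hIdiff : |I1 - I2| ≤ (1 + B) * E * δ := by
    have heq : I1 - I2 = ∫ u in U, (q1 u * Real.exp (q1 u) - q2 u * Real.exp (q2 u)) :=
      (integral_sub hintQ1 hintQ2).symm
    rw [heq, ← Real.norm_eq_abs]
    have := norm_setIntegral_le_of_norm_le_const (C := (1 + B) * E * δ) hvlt
      (fun u hu => by
        rw [Real.norm_eq_abs]
        show |q1 u * Real.exp (q1 u) - q2 u * Real.exp (q2 u)| ≤ (1 + B) * E * δ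
        have he : Real.exp (q1 u) ≤ E :=
          Real.exp_le_exp.2 ((le_abs_self _).trans (hq1 u hu))
        have hee := exp_sub_exp_abs (hq1 u hu) (hq2 u hu)
        calc |q1 u * Real.exp (q1 u) - q2 u * Real.exp (q2 u)|
            = |(q1 u - q2 u) * Real.exp (q1 u) + q2 u * (Real.exp (q1 u) - Real.exp (q2 u))| := by
              ring_nf
          _ ≤ |(q1 u - q2 u) * Real.exp (q1 u)| + |q2 u * (Real.exp (q1 u) - Real.exp (q2 u))| :=
              abs_add_le _ _
          _ = |q1 u - q2 u| * Real.exp (q1 u) + |q2 u| * |Real.exp (q1 u) - Real.exp (q2 u)| := by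
              rw [abs_mul, abs_mul, Real.abs_exp]
          _ ≤ δ * E + B * (E * |q1 u - q2 u|) := by
              refine add_le_add ?_ ?_
              · exact mul_le_mul (hd u hu) he (Real.exp_pos _).le hδ
              · exact mul_le_mul (hq2 u hu) hee (abs_nonneg _) hB
          _ ≤ δ * E + B * (E * δ) := by
              have : E * |q1 u - q2 u| ≤ E * δ := mul_le_mul_of_nonneg_left (hd u hu) hE0.le
              nlinarith
          _ = (1 + B) * E * δ := by ring)
    calc ‖∫ u in U, (q1 u * Real.exp (q1 u) - q2 u * Real.exp (q2 u))‖
        ≤ (1 + B) * E * δ * (volume U).toReal := this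
      _ = (1 + B) * E * δ := by rw [hvol]; simp
  -- |log Z1 - log Z2| ≤ E * (E * δ)
  have hlogdiff : |Real.log Z1 - Real.log Z2| ≤ E * (E * δ) := by
    have h := log_sub_log_abs (Real.exp_pos (-B)) hZ1lo hZ2lo
    calc |Real.log Z1 - Real.log Z2| ≤ |Z1 - Z2| / Real.exp (-B) := h
      _ = |Z1 - Z2| * E := by rw [Real.exp_neg, div_eq_mul_inv, inv_inv]
      _ ≤ (E * δ) * E := mul_le_mul_of_nonneg_right hZdiff hE0.le
      _ = E * (E * δ) := by ring
  -- main decomposition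
  have hkey : I1 / Z1 - Real.log Z1 - (I2 / Z2 - Real.log Z2) =
      ((I1 - I2) * Z1⁻¹ + I2 * (Z2⁻¹ * (Z1⁻¹ * (Z2 - Z1)))) -
        (Real.log Z1 - Real.log Z2) := by
    field_simp
    ring
  rw [hkey]
  have habs : |((I1 - I2) * Z1⁻¹ + I2 * (Z2⁻¹ * (Z1⁻¹ * (Z2 - Z1)))) -
      (Real.log Z1 - Real.log Z2)| ≤
      |I1 - I2| * Z1⁻¹ + |I2| * (Z2⁻¹ * (Z1⁻¹ * |Z2 - Z1|)) +
        |Real.log Z1 - Real.log Z2| := by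
    calc |((I1 - I2) * Z1⁻¹ + I2 * (Z2⁻¹ * (Z1⁻¹ * (Z2 - Z1)))) -
        (Real.log Z1 - Real.log Z2)|
        ≤ |(I1 - I2) * Z1⁻¹ + I2 * (Z2⁻¹ * (Z1⁻¹ * (Z2 - Z1)))| +
          |Real.log Z1 - Real.log Z2| := abs_sub _ _
      _ ≤ |(I1 - I2) * Z1⁻¹| + |I2 * (Z2⁻¹ * (Z1⁻¹ * (Z2 - Z1)))| +
          |Real.log Z1 - Real.log Z2| := by
          have := abs_add_le ((I1 - I2) * Z1⁻¹) (I2 * (Z2⁻¹ * (Z1⁻¹ * (Z2 - Z1))))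
          linarith
      _ = |I1 - I2| * Z1⁻¹ + |I2| * (Z2⁻¹ * (Z1⁻¹ * |Z2 - Z1|)) +
          |Real.log Z1 - Real.log Z2| := by
          rw [abs_mul, abs_mul, abs_mul, abs_mul,
            abs_of_pos (inv_pos.2 hZ1pos), abs_of_pos (inv_pos.2 hZ2pos)]
  refine habs.trans ?_
  have hZ21 : |Z2 - Z1| ≤ E * δ := by rw [abs_sub_comm]; exact hZdiff
  have step : |I1 - I2| * Z1⁻¹ + |I2| * (Z2⁻¹ * (Z1⁻¹ * |Z2 - Z1|)) +
      |Real.log Z1 - Real.log Z2| ≤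
      ((1 + B) * E * δ) * E + (B * E) * (E * (E * (E * δ))) + E * (E * δ) := by
    gcongr <;>
      first
        | exact hIdiff
        | exact hZi1
        | exact hI2b
        | exact hZi2
        | exact hZ21
        | exact hlogdiff
        | exact abs_nonneg _
        | positivity
  refine step.trans ?_
  -- final arithmetic
  have hexp : Real.exp (5 * B + 2) = E ^ 5 * Real.exp 2 := by
    rw [Real.exp_add]
    congr 1
    rw [← Real.exp_nat_mul]
    norm_num
  have h3 : (3:ℝ) ≤ Real.exp 2 := by
    have := Real.add_one_le_exp (2:ℝ); linarith
  have hBE : B ≤ E := by linarith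
  have hp : ∀ k m : ℕ, k ≤ m → E ^ k ≤ E ^ m := fun k m hkm => pow_le_pow_right₀ hE1 hkm
  have t1 : ((1 + B) * E * δ) * E ≤ E ^ 5 * δ := by
    have e1 : ((1 + B) * E * δ) * E = ((1 + B) * E ^ 2) * δ := by ring
    have e2 : (1 + B) * E ^ 2 ≤ E * E ^ 2 := by
      exact mul_le_mul_of_nonneg_right h1B (by positivity)
    have e3 : E * E ^ 2 = E ^ 3 := by ring
    have e4 : E ^ 3 ≤ E ^ 5 := hp 3 5 (by norm_num)
    rw [e1]
    exact mul_le_mul_of_nonneg_right (by linarith) hδ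
  have t2 : (B * E) * (E * (E * (E * δ))) ≤ E ^ 5 * δ := by
    have e1 : (B * E) * (E * (E * (E * δ))) = (B * E ^ 4) * δ := by ring
    have e2 : B * E ^ 4 ≤ E * E ^ 4 := by
      exact mul_le_mul_of_nonneg_right hBE (by positivity)
    have e3 : E * E ^ 4 = E ^ 5 := by ring
    rw [e1]
    exact mul_le_mul_of_nonneg_right (by linarith) hδ
  have t3 : E * (E * δ) ≤ E ^ 5 * δ := by
    have e1 : E * (E * δ) = E ^ 2 * δ := by ring
    have e4 : E ^ 2 ≤ E ^ 5 := hp 2 5 (by norm_num)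
    rw [e1]
    exact mul_le_mul_of_nonneg_right e4 hδ
  have hE5 : 0 ≤ E ^ 5 * δ := by positivity
  calc ((1 + B) * E * δ) * E + (B * E) * (E * (E * (E * δ))) + E * (E * δ)
      ≤ E ^ 5 * δ + E ^ 5 * δ + E ^ 5 * δ := by linarith
    _ = 3 * (E ^ 5 * δ) := by ring
    _ ≤ Real.exp 2 * (E ^ 5 * δ) := mul_le_mul_of_nonneg_right h3 hE5
    _ = Real.exp (5 * B + 2) * δ := by rw [hexp]; ring
/-- The centered Gibbs exponent: the Gibbs exponent with the `u`-independent
part `(1/(2λ)) tr(Σ₀ D²v)` removed. -/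
private def qf (d l : ℕ) (lam : ℝ)
    (r : EuclideanSpace ℝ (Fin d) → EuclideanSpace ℝ (Fin l) → ℝ)
    (b : EuclideanSpace ℝ (Fin d) → EuclideanSpace ℝ (Fin l) → Fin d → ℝ)
    (S : EuclideanSpace ℝ (Fin d) → EuclideanSpace ℝ (Fin l) → Matrix (Fin d) (Fin d) ℝ)
    (S0 : EuclideanSpace ℝ (Fin d) → Matrix (Fin d) (Fin d) ℝ)
    (v : EuclideanSpace ℝ (Fin d) → ℝ)
    (x : EuclideanSpace ℝ (Fin d)) (u : EuclideanSpace ℝ (Fin l)) : ℝ :=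
  (1 / lam) * (r x u + ∑ i, b x u i * pd1 d v x i +
    (1 / 2) * ∑ i, ∑ j, (S x u i j - S0 x i j) * pd2 d v x j i)

private lemma gibbsPolicy_eq_qf {d l : ℕ} {lam : ℝ} {U : Set (EuclideanSpace ℝ (Fin l))}
    {r : EuclideanSpace ℝ (Fin d) → EuclideanSpace ℝ (Fin l) → ℝ}
    {b : EuclideanSpace ℝ (Fin d) → EuclideanSpace ℝ (Fin l) → Fin d → ℝ}
    {S : EuclideanSpace ℝ (Fin d) → EuclideanSpace ℝ (Fin l) → Matrix (Fin d) (Fin d) ℝ}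
    {S0 : EuclideanSpace ℝ (Fin d) → Matrix (Fin d) (Fin d) ℝ}
    {v : EuclideanSpace ℝ (Fin d) → ℝ} (x : EuclideanSpace ℝ (Fin d))
    (u : EuclideanSpace ℝ (Fin l)) :
    gibbsPolicy d l lam U r b S v x u =
      Real.exp (qf d l lam r b S S0 v x u) /
        ∫ u' in U, Real.exp (qf d l lam r b S S0 v x u') := by
  set c : ℝ := (1 / lam) * ((1 / 2) * ∑ i, ∑ j, S0 x i j * pd2 d v x j i) with hc
  have hEq : ∀ u', gibbsExponent d l lam r b S x (fun i => pd1 d v x i)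
      (hessian d v x) u' = qf d l lam r b S S0 v x u' + c := by
    intro u'
    simp only [gibbsExponent, qf, hessian, Matrix.of_apply, hc]
    have hsplit : ∑ i, ∑ j, (S x u' i j - S0 x i j) * pd2 d v x j i
        = (∑ i, ∑ j, S x u' i j * pd2 d v x j i) -
          ∑ i, ∑ j, S0 x i j * pd2 d v x j i := by
      rw [← Finset.sum_sub_distrib]
      refine Finset.sum_congr rfl fun i _ => ?_
      rw [← Finset.sum_sub_distrib]
      exact Finset.sum_congr rfl fun j _ => by ring
    rw [hsplit]; ring
  simp only [gibbsPolicy, gibbsDensity]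
  have hfun : (fun u' => Real.exp (gibbsExponent d l lam r b S x
      (fun i => pd1 d v x i) (hessian d v x) u')) =
      fun u' => Real.exp (qf d l lam r b S S0 v x u') * Real.exp c :=
    funext fun u' => by rw [hEq u', Real.exp_add]
  rw [hfun, MeasureTheory.integral_mul_const, hEq u, Real.exp_add,
    mul_div_mul_right _ _ (Real.exp_ne_zero c)]
private lemma qf_abs_le {d l : ℕ} {lam C₀ A₁ ρni ε₀ : ℝ}
    (hlam : 0 < lam) (hC₀ : 1 ≤ C₀) (hA0 : 0 < A₁) (hρni0 : 0 < ρni) (hε₀ : 0 < ε₀)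
    {r : EuclideanSpace ℝ (Fin d) → EuclideanSpace ℝ (Fin l) → ℝ}
    {b : EuclideanSpace ℝ (Fin d) → EuclideanSpace ℝ (Fin l) → Fin d → ℝ}
    {S : EuclideanSpace ℝ (Fin d) → EuclideanSpace ℝ (Fin l) → Matrix (Fin d) (Fin d) ℝ}
    {S0 : EuclideanSpace ℝ (Fin d) → Matrix (Fin d) (Fin d) ℝ}
    {v : EuclideanSpace ℝ (Fin d) → ℝ} {x : EuclideanSpace ℝ (Fin d)}
    {u : EuclideanSpace ℝ (Fin l)}
    (h1 : |r x u| ≤ C₀) (h2 : ∀ i, |b x u i| ≤ C₀)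
    (hp : ∀ i, |pd1 d v x i| ≤ A₁ * ρni)
    (hMa : ∀ i j, |S x u i j - S0 x i j| ≤ ε₀)
    (hX : ∀ i j, |pd2 d v x i j| ≤ A₁) :
    |qf d l lam r b S S0 v x u| ≤
      ((C₀ / lam) * (1 + (d:ℝ) + (d:ℝ) ^ 2)) * (1 + A₁ * (ρni + ε₀)) := by
  have hC₀0 : (0:ℝ) < C₀ := lt_of_lt_of_le one_pos hC₀
  have hd0 : (0:ℝ) ≤ (d:ℝ) := Nat.cast_nonneg d
  have h2' : |∑ i, b x u i * pd1 d v x i| ≤ (d:ℝ) * (C₀ * (A₁ * ρni)) := by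
    calc |∑ i, b x u i * pd1 d v x i| ≤ ∑ i, |b x u i * pd1 d v x i| :=
          Finset.abs_sum_le_sum_abs _ _
      _ ≤ ∑ _i : Fin d, C₀ * (A₁ * ρni) := Finset.sum_le_sum fun i _ => by
          rw [abs_mul]
          exact mul_le_mul (h2 i) (hp i) (abs_nonneg _) hC₀0.le
      _ = (d:ℝ) * (C₀ * (A₁ * ρni)) := by
          rw [Finset.sum_const]; simp [mul_comm]
  have h3 : |∑ i, ∑ j, (S x u i j - S0 x i j) * pd2 d v x j i| ≤
      (d:ℝ) ^ 2 * (ε₀ * A₁) := by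
    calc |∑ i, ∑ j, (S x u i j - S0 x i j) * pd2 d v x j i|
        ≤ ∑ i, |∑ j, (S x u i j - S0 x i j) * pd2 d v x j i| :=
          Finset.abs_sum_le_sum_abs _ _
      _ ≤ ∑ _i : Fin d, (d:ℝ) * (ε₀ * A₁) := by
          refine Finset.sum_le_sum fun i _ => ?_
          calc |∑ j, (S x u i j - S0 x i j) * pd2 d v x j i|
              ≤ ∑ j, |(S x u i j - S0 x i j) * pd2 d v x j i| :=
                Finset.abs_sum_le_sum_abs _ _
            _ ≤ ∑ _j : Fin d, ε₀ * A₁ := Finset.sum_le_sum fun j _ => by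
                rw [abs_mul]
                exact mul_le_mul (hMa i j) (hX j i) (abs_nonneg _) hε₀.le
            _ = (d:ℝ) * (ε₀ * A₁) := by rw [Finset.sum_const]; simp [mul_comm]
      _ = (d:ℝ) ^ 2 * (ε₀ * A₁) := by rw [Finset.sum_const]; simp; ring
  have habs : |qf d l lam r b S S0 v x u| ≤
      (1 / lam) * (C₀ + (d:ℝ) * (C₀ * (A₁ * ρni)) + (1 / 2) * ((d:ℝ) ^ 2 * (ε₀ * A₁))) := by
    show |(1 / lam) * (r x u + ∑ i, b x u i * pd1 d v x i +
      (1 / 2) * ∑ i, ∑ j, (S x u i j - S0 x i j) * pd2 d v x j i)| ≤ _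
    rw [abs_mul, abs_of_pos (by positivity : (0:ℝ) < 1 / lam)]
    refine mul_le_mul_of_nonneg_left ?_ (by positivity)
    calc |r x u + ∑ i, b x u i * pd1 d v x i +
          (1 / 2) * ∑ i, ∑ j, (S x u i j - S0 x i j) * pd2 d v x j i|
        ≤ |r x u + ∑ i, b x u i * pd1 d v x i| +
          |(1 / 2) * ∑ i, ∑ j, (S x u i j - S0 x i j) * pd2 d v x j i| := abs_add_le _ _
      _ ≤ |r x u| + |∑ i, b x u i * pd1 d v x i| +
          (1 / 2) * |∑ i, ∑ j, (S x u i j - S0 x i j) * pd2 d v x j i| := by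
          rw [abs_mul]
          have := abs_add_le (r x u) (∑ i, b x u i * pd1 d v x i)
          simp only [abs_of_pos (by norm_num : (0:ℝ) < 1/2)]
          linarith
      _ ≤ C₀ + (d:ℝ) * (C₀ * (A₁ * ρni)) + (1 / 2) * ((d:ℝ) ^ 2 * (ε₀ * A₁)) := by
          linarith
  refine habs.trans ?_
  have hQd : C₀ * (d:ℝ) ≤ C₀ * (1 + (d:ℝ) + (d:ℝ) ^ 2) :=
    mul_le_mul_of_nonneg_left (by nlinarith [sq_nonneg (d:ℝ)]) hC₀0.le
  have m1 : C₀ ≤ C₀ * (1 + (d:ℝ) + (d:ℝ) ^ 2) := by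
    nlinarith [mul_nonneg hC₀0.le hd0, mul_nonneg hC₀0.le (sq_nonneg (d:ℝ))]
  have m2 : (d:ℝ) * (C₀ * (A₁ * ρni)) ≤ (C₀ * (1 + (d:ℝ) + (d:ℝ) ^ 2)) * (A₁ * ρni) := by
    calc (d:ℝ) * (C₀ * (A₁ * ρni)) = (C₀ * (d:ℝ)) * (A₁ * ρni) := by ring
      _ ≤ (C₀ * (1 + (d:ℝ) + (d:ℝ) ^ 2)) * (A₁ * ρni) :=
          mul_le_mul_of_nonneg_right hQd (mul_nonneg hA0.le hρni0.le)
  have m3 : (1 / 2) * ((d:ℝ) ^ 2 * (ε₀ * A₁)) ≤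
      (C₀ * (1 + (d:ℝ) + (d:ℝ) ^ 2)) * (A₁ * ε₀) := by
    have hb3 : (1 / 2) * (d:ℝ) ^ 2 ≤ C₀ * (1 + (d:ℝ) + (d:ℝ) ^ 2) := by
      nlinarith [mul_le_mul_of_nonneg_right hC₀ (sq_nonneg (d:ℝ)),
        mul_nonneg hC₀0.le hd0, hC₀0.le]
    calc (1 / 2) * ((d:ℝ) ^ 2 * (ε₀ * A₁)) = ((1 / 2) * (d:ℝ) ^ 2) * (A₁ * ε₀) := by ring
      _ ≤ (C₀ * (1 + (d:ℝ) + (d:ℝ) ^ 2)) * (A₁ * ε₀) :=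
          mul_le_mul_of_nonneg_right hb3 (mul_nonneg hA0.le hε₀.le)
  have hexp : (C₀ * (1 + (d:ℝ) + (d:ℝ) ^ 2)) * (1 + A₁ * (ρni + ε₀)) =
      C₀ * (1 + (d:ℝ) + (d:ℝ) ^ 2) +
      (C₀ * (1 + (d:ℝ) + (d:ℝ) ^ 2)) * (A₁ * ρni) +
      (C₀ * (1 + (d:ℝ) + (d:ℝ) ^ 2)) * (A₁ * ε₀) := by ring
  have heq : ((C₀ / lam) * (1 + (d:ℝ) + (d:ℝ) ^ 2)) * (1 + A₁ * (ρni + ε₀)) =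
      (1 / lam) * ((C₀ * (1 + (d:ℝ) + (d:ℝ) ^ 2)) * (1 + A₁ * (ρni + ε₀))) := by ring
  rw [heq]
  refine mul_le_mul_of_nonneg_left ?_ (by positivity)
  linarith
set_option maxHeartbeats 1000000 in
private lemma qf_diff_le {d l : ℕ} {lam C₀ A₁ ρni ρh1 ρh2 ε₀ ε₁ h : ℝ}
    (hlam : 0 < lam) (hC₀ : 1 ≤ C₀) (hA0 : 0 < A₁) (hρni0 : 0 < ρni)
    (hρh10 : 0 < ρh1) (hρh20 : 0 < ρh2) (hni_le_h1 : ρni ≤ ρh1)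
    (hε₀ : 0 < ε₀) (hε₁ : 0 < ε₁) (hh0 : 0 ≤ h)
    {r : EuclideanSpace ℝ (Fin d) → EuclideanSpace ℝ (Fin l) → ℝ}
    {b : EuclideanSpace ℝ (Fin d) → EuclideanSpace ℝ (Fin l) → Fin d → ℝ}
    {S : EuclideanSpace ℝ (Fin d) → EuclideanSpace ℝ (Fin l) → Matrix (Fin d) (Fin d) ℝ}
    {S0 : EuclideanSpace ℝ (Fin d) → Matrix (Fin d) (Fin d) ℝ}
    {v : EuclideanSpace ℝ (Fin d) → ℝ} {x y : EuclideanSpace ℝ (Fin d)}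
    {u : EuclideanSpace ℝ (Fin l)}
    (hrH : |r x u - r y u| ≤ C₀ * h)
    (hbb : ∀ i, |b y u i| ≤ C₀)
    (hbH : ∀ i, |b x u i - b y u i| ≤ C₀ * h)
    (hp : ∀ i, |pd1 d v x i| ≤ A₁ * ρni)
    (hpH : ∀ i, |pd1 d v x i - pd1 d v y i| ≤ A₁ * h * ρh1)
    (hMa : ∀ i j, |S y u i j - S0 y i j| ≤ ε₀)
    (hMH : ∀ i j, |(S x u i j - S0 x i j) - (S y u i j - S0 y i j)| ≤ ε₁ * h)
    (hX : ∀ i j, |pd2 d v x i j| ≤ A₁)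
    (hXH : ∀ i j, |pd2 d v x i j - pd2 d v y i j| ≤ A₁ * h * ρh2) :
    |qf d l lam r b S S0 v x u - qf d l lam r b S S0 v y u| ≤
      (2 * ((C₀ / lam) * (1 + (d:ℝ) + (d:ℝ) ^ 2)) *
        (1 + A₁ * (ρh1 + ε₁ + ρh2 * ε₀))) * h := by
  have hC₀0 : (0:ℝ) < C₀ := lt_of_lt_of_le one_pos hC₀
  have hd0 : (0:ℝ) ≤ (d:ℝ) := Nat.cast_nonneg d
  have s1 : ∑ i, (b x u i * pd1 d v x i - b y u i * pd1 d v y i) =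
      (∑ i, b x u i * pd1 d v x i) - ∑ i, b y u i * pd1 d v y i := by
    rw [Finset.sum_sub_distrib]
  have s2 : ∑ i, ∑ j, ((S x u i j - S0 x i j) * pd2 d v x j i -
        (S y u i j - S0 y i j) * pd2 d v y j i) =
      (∑ i, ∑ j, (S x u i j - S0 x i j) * pd2 d v x j i) -
        ∑ i, ∑ j, (S y u i j - S0 y i j) * pd2 d v y j i := by
    rw [← Finset.sum_sub_distrib]
    exact Finset.sum_congr rfl fun i _ => by rw [Finset.sum_sub_distrib]
  have e0 : qf d l lam r b S S0 v x u - qf d l lam r b S S0 v y u =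
      (1 / lam) * ((r x u - r y u) +
        (∑ i, (b x u i * pd1 d v x i - b y u i * pd1 d v y i)) +
        (1 / 2) * ∑ i, ∑ j, ((S x u i j - S0 x i j) * pd2 d v x j i -
          (S y u i j - S0 y i j) * pd2 d v y j i)) := by
    rw [s1, s2]
    show (1 / lam) * _ - (1 / lam) * _ = _
    ring
  have tB : |∑ i, (b x u i * pd1 d v x i - b y u i * pd1 d v y i)| ≤
      (d:ℝ) * ((C₀ * h) * (A₁ * ρni) + C₀ * (A₁ * h * ρh1)) := by
    calc |∑ i, (b x u i * pd1 d v x i - b y u i * pd1 d v y i)|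
        ≤ ∑ i, |b x u i * pd1 d v x i - b y u i * pd1 d v y i| :=
          Finset.abs_sum_le_sum_abs _ _
      _ ≤ ∑ _i : Fin d, ((C₀ * h) * (A₁ * ρni) + C₀ * (A₁ * h * ρh1)) := by
          refine Finset.sum_le_sum fun i _ => ?_
          calc |b x u i * pd1 d v x i - b y u i * pd1 d v y i|
              = |(b x u i - b y u i) * pd1 d v x i +
                  b y u i * (pd1 d v x i - pd1 d v y i)| := by ring_nf
            _ ≤ |(b x u i - b y u i) * pd1 d v x i| +
                |b y u i * (pd1 d v x i - pd1 d v y i)| := abs_add_le _ _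
            _ = |b x u i - b y u i| * |pd1 d v x i| +
                |b y u i| * |pd1 d v x i - pd1 d v y i| := by rw [abs_mul, abs_mul]
            _ ≤ (C₀ * h) * (A₁ * ρni) + C₀ * (A₁ * h * ρh1) :=
                add_le_add
                  (mul_le_mul (hbH i) (hp i) (abs_nonneg _) (by positivity))
                  (mul_le_mul (hbb i) (hpH i) (abs_nonneg _) hC₀0.le)
      _ = (d:ℝ) * ((C₀ * h) * (A₁ * ρni) + C₀ * (A₁ * h * ρh1)) := by
          rw [Finset.sum_const]; simp; ring
  have tM : |∑ i, ∑ j, ((S x u i j - S0 x i j) * pd2 d v x j i -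
        (S y u i j - S0 y i j) * pd2 d v y j i)| ≤
      (d:ℝ) ^ 2 * ((ε₁ * h) * A₁ + ε₀ * (A₁ * h * ρh2)) := by
    calc |∑ i, ∑ j, ((S x u i j - S0 x i j) * pd2 d v x j i -
          (S y u i j - S0 y i j) * pd2 d v y j i)|
        ≤ ∑ i, |∑ j, ((S x u i j - S0 x i j) * pd2 d v x j i -
            (S y u i j - S0 y i j) * pd2 d v y j i)| := Finset.abs_sum_le_sum_abs _ _
      _ ≤ ∑ _i : Fin d, ((d:ℝ) * ((ε₁ * h) * A₁ + ε₀ * (A₁ * h * ρh2))) := by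
          refine Finset.sum_le_sum fun i _ => ?_
          calc |∑ j, ((S x u i j - S0 x i j) * pd2 d v x j i -
                (S y u i j - S0 y i j) * pd2 d v y j i)|
              ≤ ∑ j, |(S x u i j - S0 x i j) * pd2 d v x j i -
                  (S y u i j - S0 y i j) * pd2 d v y j i| := Finset.abs_sum_le_sum_abs _ _
            _ ≤ ∑ _j : Fin d, ((ε₁ * h) * A₁ + ε₀ * (A₁ * h * ρh2)) := by
                refine Finset.sum_le_sum fun j _ => ?_
                calc |(S x u i j - S0 x i j) * pd2 d v x j i -
                      (S y u i j - S0 y i j) * pd2 d v y j i|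
                    = |((S x u i j - S0 x i j) - (S y u i j - S0 y i j)) * pd2 d v x j i +
                        (S y u i j - S0 y i j) * (pd2 d v x j i - pd2 d v y j i)| := by
                      ring_nf
                  _ ≤ |((S x u i j - S0 x i j) - (S y u i j - S0 y i j)) * pd2 d v x j i| +
                      |(S y u i j - S0 y i j) * (pd2 d v x j i - pd2 d v y j i)| :=
                      abs_add_le _ _
                  _ = |(S x u i j - S0 x i j) - (S y u i j - S0 y i j)| * |pd2 d v x j i| +
                      |S y u i j - S0 y i j| * |pd2 d v x j i - pd2 d v y j i| := by
                      rw [abs_mul, abs_mul]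
                  _ ≤ (ε₁ * h) * A₁ + ε₀ * (A₁ * h * ρh2) :=
                      add_le_add
                        (mul_le_mul (hMH i j) (hX j i) (abs_nonneg _) (by positivity))
                        (mul_le_mul (hMa i j) (hXH j i) (abs_nonneg _) hε₀.le)
            _ = (d:ℝ) * ((ε₁ * h) * A₁ + ε₀ * (A₁ * h * ρh2)) := by
                rw [Finset.sum_const]; simp; ring
      _ = (d:ℝ) ^ 2 * ((ε₁ * h) * A₁ + ε₀ * (A₁ * h * ρh2)) := by
          rw [Finset.sum_const]; simp; ring
  have habs : |qf d l lam r b S S0 v x u - qf d l lam r b S S0 v y u| ≤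
      (1 / lam) * (C₀ * h +
        (d:ℝ) * ((C₀ * h) * (A₁ * ρni) + C₀ * (A₁ * h * ρh1)) +
        (1 / 2) * ((d:ℝ) ^ 2 * ((ε₁ * h) * A₁ + ε₀ * (A₁ * h * ρh2)))) := by
    rw [e0, abs_mul, abs_of_pos (by positivity : (0:ℝ) < 1 / lam)]
    refine mul_le_mul_of_nonneg_left ?_ (by positivity)
    set a1 := r x u - r y u
    set a2 := ∑ i, (b x u i * pd1 d v x i - b y u i * pd1 d v y i)
    set a3 := ∑ i, ∑ j, ((S x u i j - S0 x i j) * pd2 d v x j i -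
      (S y u i j - S0 y i j) * pd2 d v y j i)
    calc |a1 + a2 + (1 / 2) * a3| ≤ |a1 + a2| + |(1 / 2) * a3| := abs_add_le _ _
      _ ≤ |a1| + |a2| + (1 / 2) * |a3| := by
          rw [abs_mul]
          have := abs_add_le a1 a2
          simp only [abs_of_pos (by norm_num : (0:ℝ) < 1/2)]
          linarith
      _ ≤ _ := by linarith [hrH, tB, tM]
  refine habs.trans ?_
  have hQd : C₀ * (d:ℝ) ≤ C₀ * (1 + (d:ℝ) + (d:ℝ) ^ 2) :=
    mul_le_mul_of_nonneg_left (by nlinarith [sq_nonneg (d:ℝ)]) hC₀0.le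
  have m1 : C₀ ≤ 2 * (C₀ * (1 + (d:ℝ) + (d:ℝ) ^ 2)) := by
    nlinarith [mul_nonneg hC₀0.le hd0, mul_nonneg hC₀0.le (sq_nonneg (d:ℝ)), hC₀0.le]
  have m2 : (C₀ * (d:ℝ)) * (A₁ * (ρni + ρh1)) ≤
      2 * (C₀ * (1 + (d:ℝ) + (d:ℝ) ^ 2)) * (A₁ * ρh1) := by
    have e1 : A₁ * (ρni + ρh1) ≤ 2 * (A₁ * ρh1) := by
      have := mul_le_mul_of_nonneg_left hni_le_h1 hA0.le
      nlinarith
    calc (C₀ * (d:ℝ)) * (A₁ * (ρni + ρh1)) ≤ (C₀ * (d:ℝ)) * (2 * (A₁ * ρh1)) :=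
          mul_le_mul_of_nonneg_left e1 (mul_nonneg hC₀0.le hd0)
      _ ≤ (C₀ * (1 + (d:ℝ) + (d:ℝ) ^ 2)) * (2 * (A₁ * ρh1)) :=
          mul_le_mul_of_nonneg_right hQd (by positivity)
      _ = 2 * (C₀ * (1 + (d:ℝ) + (d:ℝ) ^ 2)) * (A₁ * ρh1) := by ring
  have hb3 : (1 / 2) * (d:ℝ) ^ 2 ≤ 2 * (C₀ * (1 + (d:ℝ) + (d:ℝ) ^ 2)) := by
    nlinarith [mul_le_mul_of_nonneg_right hC₀ (sq_nonneg (d:ℝ)),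
      mul_nonneg hC₀0.le hd0, hC₀0.le]
  have m3 : ((1 / 2) * (d:ℝ) ^ 2) * (A₁ * (ε₁ + ε₀ * ρh2)) ≤
      2 * (C₀ * (1 + (d:ℝ) + (d:ℝ) ^ 2)) * (A₁ * ε₁) +
      2 * (C₀ * (1 + (d:ℝ) + (d:ℝ) ^ 2)) * (A₁ * (ρh2 * ε₀)) := by
    have hs : (0:ℝ) ≤ A₁ * ε₁ := mul_nonneg hA0.le hε₁.le
    have ht : (0:ℝ) ≤ A₁ * (ρh2 * ε₀) := mul_nonneg hA0.le (mul_nonneg hρh20.le hε₀.le)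
    calc ((1 / 2) * (d:ℝ) ^ 2) * (A₁ * (ε₁ + ε₀ * ρh2))
        = ((1 / 2) * (d:ℝ) ^ 2) * (A₁ * ε₁) +
          ((1 / 2) * (d:ℝ) ^ 2) * (A₁ * (ρh2 * ε₀)) := by ring
      _ ≤ 2 * (C₀ * (1 + (d:ℝ) + (d:ℝ) ^ 2)) * (A₁ * ε₁) +
          2 * (C₀ * (1 + (d:ℝ) + (d:ℝ) ^ 2)) * (A₁ * (ρh2 * ε₀)) :=
          add_le_add (mul_le_mul_of_nonneg_right hb3 hs)
            (mul_le_mul_of_nonneg_right hb3 ht)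
  have inner : C₀ + (C₀ * (d:ℝ)) * (A₁ * (ρni + ρh1)) +
      ((1 / 2) * (d:ℝ) ^ 2) * (A₁ * (ε₁ + ε₀ * ρh2)) ≤
      2 * (C₀ * (1 + (d:ℝ) + (d:ℝ) ^ 2)) * (1 + A₁ * (ρh1 + ε₁ + ρh2 * ε₀)) := by
    have hexp : 2 * (C₀ * (1 + (d:ℝ) + (d:ℝ) ^ 2)) * (1 + A₁ * (ρh1 + ε₁ + ρh2 * ε₀)) =
        2 * (C₀ * (1 + (d:ℝ) + (d:ℝ) ^ 2)) +
        2 * (C₀ * (1 + (d:ℝ) + (d:ℝ) ^ 2)) * (A₁ * ρh1) +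
        (2 * (C₀ * (1 + (d:ℝ) + (d:ℝ) ^ 2)) * (A₁ * ε₁) +
          2 * (C₀ * (1 + (d:ℝ) + (d:ℝ) ^ 2)) * (A₁ * (ρh2 * ε₀))) := by ring
    rw [hexp]
    linarith
  calc (1 / lam) * (C₀ * h +
        (d:ℝ) * ((C₀ * h) * (A₁ * ρni) + C₀ * (A₁ * h * ρh1)) +
        (1 / 2) * ((d:ℝ) ^ 2 * ((ε₁ * h) * A₁ + ε₀ * (A₁ * h * ρh2))))
      = (1 / lam) * ((C₀ + (C₀ * (d:ℝ)) * (A₁ * (ρni + ρh1)) +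
          ((1 / 2) * (d:ℝ) ^ 2) * (A₁ * (ε₁ + ε₀ * ρh2))) * h) := by ring
    _ ≤ (1 / lam) * ((2 * (C₀ * (1 + (d:ℝ) + (d:ℝ) ^ 2)) *
          (1 + A₁ * (ρh1 + ε₁ + ρh2 * ε₀))) * h) := by
        refine mul_le_mul_of_nonneg_left (mul_le_mul_of_nonneg_right inner hh0)
          (by positivity)
    _ = (2 * ((C₀ / lam) * (1 + (d:ℝ) + (d:ℝ) ^ 2)) *
          (1 + A₁ * (ρh1 + ε₁ + ρh2 * ε₀))) * h := by
        field_simp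

set_option maxHeartbeats 1000000

private lemma rpow_side {ρ A t c : ℝ} (hρ0 : 0 < ρ) (hc : 0 ≤ c)
    (h : ρ ^ t * c ≤ A) : c ≤ A * ρ ^ (-t) := by
  have h1 : (0:ℝ) < ρ ^ t := Real.rpow_pos_of_pos hρ0 _
  have h2 : (0:ℝ) < ρ ^ (-t) := Real.rpow_pos_of_pos hρ0 _
  have h3 : ρ ^ t * ρ ^ (-t) = 1 := by
    rw [← Real.rpow_add hρ0]; simp
  calc c = (ρ ^ t * c) * ρ ^ (-t) := by
        rw [mul_comm (ρ ^ t) c, mul_assoc, h3, mul_one]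
    _ ≤ A * ρ ^ (-t) := mul_le_mul_of_nonneg_right h h2.le


/-- Lemma 2.3 (second part): sup-norm and Hölder bounds for the entropy of the Gibbs policy
`π(x,u) = Γ(x, Dv(x), D²v(x))(u)` under (cond1), (cond2), `|U| = 1`, `ρ ≥ 1`, `A₁ ≥ 1`,
for `v` satisfying the estimates of Lemma 2.1 with constant `A₁`. -/
theorem stmt3 (d l : ℕ) (α lam C₀ : ℝ)
    (hα0 : 0 < α) (hα1 : α < 1) (hlam : 0 < lam) (hC₀ : 1 ≤ C₀) :
    ∃ C : ℝ, 0 < C ∧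
    ∀ (U : Set (EuclideanSpace ℝ (Fin l)))
      (r : EuclideanSpace ℝ (Fin d) → EuclideanSpace ℝ (Fin l) → ℝ)
      (b : EuclideanSpace ℝ (Fin d) → EuclideanSpace ℝ (Fin l) → Fin d → ℝ)
      (S : EuclideanSpace ℝ (Fin d) → EuclideanSpace ℝ (Fin l) → Matrix (Fin d) (Fin d) ℝ)
      (S0 : EuclideanSpace ℝ (Fin d) → Matrix (Fin d) (Fin d) ℝ)
      (ε₀ ε₁ ρ A₁ : ℝ)
      (v : EuclideanSpace ℝ (Fin d) → ℝ),
      MeasurableSet U → Bornology.IsBounded U → volume U = 1 →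
      -- measurability in the control variable
      (∀ x, Measurable fun u => r x u) →
      (∀ x i, Measurable fun u => b x u i) →
      (∀ x i j, Measurable fun u => S x u i j) →
      -- (cond1)
      (∀ u ∈ U, ∀ x (ξ : Fin d → ℝ),
        (1 / C₀) * ∑ i, ξ i ^ 2 ≤ ∑ i, ∑ j, ξ i * S x u i j * ξ j) →
      (∀ u ∈ U, ∀ x, |r x u| ≤ C₀) →
      (∀ u ∈ U, ∀ x y, dist x y ≤ 1 → |r x u - r y u| ≤ C₀ * dist x y ^ α) →
      (∀ u ∈ U, ∀ x i, |b x u i| ≤ C₀) →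
      (∀ u ∈ U, ∀ x y, dist x y ≤ 1 → ∀ i, |b x u i - b y u i| ≤ C₀ * dist x y ^ α) →
      (∀ u ∈ U, ∀ x i j, |S x u i j| ≤ C₀) →
      (∀ u ∈ U, ∀ x y, dist x y ≤ 1 → ∀ i j, |S x u i j - S y u i j| ≤ C₀ * dist x y ^ α) →
      -- (cond2)
      0 < ε₀ → ε₀ < 1 → 0 < ε₁ → ε₁ < 1 →
      (∀ u ∈ U, ∀ x i j, |S x u i j - S0 x i j| ≤ ε₀) →
      (∀ u ∈ U, ∀ x y, dist x y ≤ 1 → ∀ i j,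
        |(S x u i j - S0 x i j) - (S y u i j - S0 y i j)| ≤ ε₁ * dist x y ^ α) →
      -- ρ ≥ 1, A₁ ≥ 1
      1 ≤ ρ → 1 ≤ A₁ →
      -- v ∈ C^{2,α} with the estimates of Lemma 2.1 (constant A₁)
      ContDiff ℝ 2 v →
      (∀ x, ρ * |v x| ≤ A₁) →
      (∀ x y, dist x y ≤ 1 → ρ ^ (1 - α/2) * |v x - v y| ≤ A₁ * dist x y ^ α) →
      (∀ x y, dist x y ≤ 1 →
        ρ ^ (1/2 - α/2) * ‖fderiv ℝ v x - fderiv ℝ v y‖ ≤ A₁ * dist x y ^ α) →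
      (∀ x y, dist x y ≤ 1 →
        ρ ^ (-α/2) * ‖iteratedFDeriv ℝ 2 v x - iteratedFDeriv ℝ 2 v y‖ ≤ A₁ * dist x y ^ α) →
      (∀ x, ρ ^ ((1:ℝ)/2) * ‖fderiv ℝ v x‖ ≤ A₁) →
      (∀ x, ‖iteratedFDeriv ℝ 2 v x‖ ≤ A₁) →
      -- conclusions: bounds on the entropy ∫_U π ln π du of the Gibbs policy
      (∀ x, |∫ u in U, Real.log (gibbsPolicy d l lam U r b S v x u) *
          gibbsPolicy d l lam U r b S v x u| ≤
        C * (1 + A₁ * (ρ ^ (-(1:ℝ)/2) + ε₀))) ∧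
      (∀ x y, dist x y ≤ 1 →
        |(∫ u in U, Real.log (gibbsPolicy d l lam U r b S v x u) *
            gibbsPolicy d l lam U r b S v x u) -
          (∫ u in U, Real.log (gibbsPolicy d l lam U r b S v y u) *
            gibbsPolicy d l lam U r b S v y u)| ≤
          Real.exp (C * (1 + A₁ * (ρ ^ (α/2 - 1/2) + ε₁ + ρ ^ (α/2) * ε₀))) *
            dist x y ^ α) := by
  have hC₀0 : (0:ℝ) < C₀ := lt_of_lt_of_le one_pos hC₀
  have hd0 : (0:ℝ) ≤ (d:ℝ) := Nat.cast_nonneg d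
  set K₀ : ℝ := (C₀ / lam) * (1 + (d:ℝ) + (d:ℝ) ^ 2) with hK₀def
  have hK₀pos : 0 < K₀ := by positivity
  refine ⟨8 * (K₀ + 1), by positivity, ?_⟩
  intro U r b S S0 ε₀ ε₁ ρ A₁ v hUm hUb hUvol hrm hbm hSm hell hr hrH hb hbH hS hSH
    hε₀ hε₀1 hε₁ hε₁1 hM hMH hρ hA hv2 hv0 hv0H hv1H hv2H hv1 hv2s
  have hρ0 : (0:ℝ) < ρ := lt_of_lt_of_le one_pos hρ
  have hA0 : (0:ℝ) < A₁ := lt_of_lt_of_le one_pos hA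
  set ρni : ℝ := ρ ^ (-(1:ℝ)/2) with hρnidef
  set ρh1 : ℝ := ρ ^ (α/2 - 1/2) with hρh1def
  set ρh2 : ℝ := ρ ^ (α/2) with hρh2def
  have hρni0 : 0 < ρni := Real.rpow_pos_of_pos hρ0 _
  have hρh10 : 0 < ρh1 := Real.rpow_pos_of_pos hρ0 _
  have hρh20 : 0 < ρh2 := Real.rpow_pos_of_pos hρ0 _
  have hni_le_h1 : ρni ≤ ρh1 := by
    rw [hρnidef, hρh1def]
    exact Real.rpow_le_rpow_of_exponent_le hρ (by linarith)
  have hone_le_h2 : (1:ℝ) ≤ ρh2 := by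
    rw [hρh2def]
    calc (1:ℝ) = ρ ^ (0:ℝ) := by rw [Real.rpow_zero]
      _ ≤ ρ ^ (α/2) := Real.rpow_le_rpow_of_exponent_le hρ (by linarith)
  -- bounds on derivatives of v
  have hp_bound : ∀ x i, |pd1 d v x i| ≤ A₁ * ρni := by
    intro x i
    refine (pd1_abs_le v x i).trans ?_
    have h := rpow_side hρ0 (norm_nonneg _) (hv1 x)
    rwa [show -((1:ℝ)/2) = -(1:ℝ)/2 by ring, ← hρnidef] at h
  have hX_bound : ∀ x i j, |pd2 d v x i j| ≤ A₁ := fun x i j =>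
    (pd2_abs_le hv2 x i j).trans (hv2s x)
  have hp_holder : ∀ x y, dist x y ≤ 1 → ∀ i,
      |pd1 d v x i - pd1 d v y i| ≤ A₁ * dist x y ^ α * ρh1 := by
    intro x y hxy i
    refine (pd1_sub_abs_le v x y i).trans ?_
    have h := rpow_side hρ0 (norm_nonneg _) (hv1H x y hxy)
    rwa [show -((1:ℝ)/2 - α/2) = α/2 - 1/2 by ring, ← hρh1def] at h
  have hX_holder : ∀ x y, dist x y ≤ 1 → ∀ i j,
      |pd2 d v x i j - pd2 d v y i j| ≤ A₁ * dist x y ^ α * ρh2 := by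
    intro x y hxy i j
    refine (pd2_sub_abs_le hv2 x y i j).trans ?_
    have h := rpow_side hρ0 (norm_nonneg _) (hv2H x y hxy)
    rwa [show -(-α/2) = α/2 by ring, ← hρh2def] at h
  -- the centered exponent and its bounds
  set B : ℝ := K₀ * (1 + A₁ * (ρni + ε₀)) with hBdef
  have hB0 : 0 ≤ B := by positivity
  have hqm : ∀ x, Measurable (qf d l lam r b S S0 v x) := by
    intro x
    apply Measurable.const_mul
    apply Measurable.add
    apply Measurable.add
    · exact hrm x
    · exact Finset.measurable_sum _ fun i _ => (hbm x i).mul_const _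
    · apply Measurable.const_mul
      exact Finset.measurable_sum _ fun i _ =>
        Finset.measurable_sum _ fun j _ => ((hSm x i j).sub measurable_const).mul_const _
  have hq_abs : ∀ x, ∀ u ∈ U, |qf d l lam r b S S0 v x u| ≤ B := by
    intro x u hu
    rw [hBdef, hK₀def]
    exact qf_abs_le hlam hC₀ hA0 hρni0 hε₀ (hr u hu x) (fun i => hb u hu x i)
      (fun i => hp_bound x i) (fun i j => hM u hu x i j) (fun i j => hX_bound x i j)
  set Sρ : ℝ := ρh1 + ε₁ + ρh2 * ε₀ with hSρdef
  have hSρ0 : 0 < Sρ := by positivity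
  have hq_diff : ∀ x y, dist x y ≤ 1 → ∀ u ∈ U,
      |qf d l lam r b S S0 v x u - qf d l lam r b S S0 v y u| ≤
        (2 * K₀ * (1 + A₁ * Sρ)) * dist x y ^ α := by
    intro x y hxy u hu
    rw [hK₀def, hSρdef]
    exact qf_diff_le hlam hC₀ hA0 hρni0 hρh10 hρh20 hni_le_h1 hε₀ hε₁
      (Real.rpow_nonneg dist_nonneg _) (hrH u hu x y hxy) (fun i => hb u hu y i)
      (fun i => hbH u hu x y hxy i) (fun i => hp_bound x i) (fun i => hp_holder x y hxy i)
      (fun i j => hM u hu y i j) (fun i j => hMH u hu x y hxy i j)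
      (fun i j => hX_bound x i j) (fun i j => hX_holder x y hxy i j)
  -- rewriting the entropy integrand
  have hrw : ∀ x, (fun u => Real.log (gibbsPolicy d l lam U r b S v x u) *
      gibbsPolicy d l lam U r b S v x u) = fun u =>
      (qf d l lam r b S S0 v x u -
        Real.log (∫ u' in U, Real.exp (qf d l lam r b S S0 v x u'))) *
      (Real.exp (qf d l lam r b S S0 v x u) /
        (∫ u' in U, Real.exp (qf d l lam r b S S0 v x u'))) := by
    intro x
    obtain ⟨hint, hZlo, hZhi⟩ := Z_facts hUm hUvol (hqm x) (hq_abs x)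
    have hZpos : 0 < ∫ u' in U, Real.exp (qf d l lam r b S S0 v x u') :=
      lt_of_lt_of_le (Real.exp_pos _) hZlo
    funext u
    rw [gibbsPolicy_eq_qf (S0 := S0) x u, Real.log_div (Real.exp_ne_zero _) hZpos.ne',
      Real.log_exp]
  constructor
  · -- sup bound
    intro x
    rw [hrw x]
    refine (entropy_abs_le hUm hUvol (hqm x) hB0 (hq_abs x)).trans ?_
    have h1 : (0:ℝ) ≤ 1 + A₁ * (ρni + ε₀) := by positivity
    calc 2 * B = (2 * K₀) * (1 + A₁ * (ρni + ε₀)) := by rw [hBdef]; ring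
      _ ≤ (8 * (K₀ + 1)) * (1 + A₁ * (ρni + ε₀)) := by
          exact mul_le_mul_of_nonneg_right (by linarith) h1
  · -- Hölder bound
    intro x y hxy
    rw [hrw x, hrw y]
    have hh0 : (0:ℝ) ≤ dist x y ^ α := Real.rpow_nonneg dist_nonneg _
    have hδ0 : (0:ℝ) ≤ (2 * K₀ * (1 + A₁ * Sρ)) * dist x y ^ α := by positivity
    refine (entropy_diff_le hUm hUvol (hqm x) (hqm y) hB0 hδ0 (hq_abs x) (hq_abs y)
      (hq_diff x y hxy)).trans ?_
    -- exp (5B+2) * (2K₀(1+A₁Sρ) h) ≤ exp (8(K₀+1)(1+A₁Sρ)) * h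
    set T : ℝ := 1 + A₁ * Sρ with hTdef
    have hT1 : (1:ℝ) ≤ T := by
      have := mul_pos hA0 hSρ0
      rw [hTdef]; linarith
    have hsum : ρni + ε₀ ≤ Sρ := by
      have h1 : (1:ℝ) * ε₀ ≤ ρh2 * ε₀ := mul_le_mul_of_nonneg_right hone_le_h2 hε₀.le
      rw [hSρdef]; linarith [hni_le_h1]
    have hBT : B ≤ K₀ * T := by
      have h2 : A₁ * (ρni + ε₀) ≤ A₁ * Sρ := mul_le_mul_of_nonneg_left hsum hA0.le
      have h3 : 1 + A₁ * (ρni + ε₀) ≤ 1 + A₁ * Sρ := by linarith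
      rw [hBdef, hTdef]
      exact mul_le_mul_of_nonneg_left h3 hK₀pos.le
    have h2K : 2 * K₀ * T ≤ Real.exp (2 * K₀ * T) := by
      have := Real.add_one_le_exp (2 * K₀ * T); linarith
    calc Real.exp (5 * B + 2) * ((2 * K₀ * T) * dist x y ^ α)
        = (Real.exp (5 * B + 2) * (2 * K₀ * T)) * dist x y ^ α := by ring
      _ ≤ (Real.exp (5 * (K₀ * T) + 2) * Real.exp (2 * K₀ * T)) * dist x y ^ α := by
          refine mul_le_mul_of_nonneg_right ?_ hh0
          refine mul_le_mul (Real.exp_le_exp.2 (by linarith)) h2K (by positivity)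
            (Real.exp_pos _).le
      _ = Real.exp (7 * (K₀ * T) + 2) * dist x y ^ α := by
          rw [← Real.exp_add]; ring_nf
      _ ≤ Real.exp (8 * (K₀ + 1) * T) * dist x y ^ α := by
          refine mul_le_mul_of_nonneg_right (Real.exp_le_exp.2 ?_) hh0
          have hKT : 0 < K₀ * T := mul_pos hK₀pos (lt_of_lt_of_le one_pos hT1)
          nlinarith [hKT, hT1, hK₀pos]
end
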